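/- arXiv:1306.2878 — 5 statements merged into one kernel-verified Lean document; each statement's English description precedes it below -/
import Mathlib

section
/- Let η ≥ 0 and let n11, n22, n12, n21 be nonnegative integers. Define L_i = (n_ii − n_ij)⁺ for (i,j) ∈ {(1,2),(2,1)}, and define Ũ_i = n_ii − min(L_j, n_ij) if n_ij ≤ n_ii, and Ũ_i = min((n_ij − L_j)⁺, n_ii) if n_ij > n_ii. Then for each i, L_i ≤ Ũ_i. -/
lemma max_sub_zero_le_ite {α : Type*} [AddCommGroup α] [LinearOrder α] [IsOrderedAddMonoid α]
    {a : α} (ha : 0 ≤ a) (b x : α) :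
    max (a - b) 0 ≤ if b ≤ a then a - min x b else min (max (b - x) 0) a := by
  split_ifs with hba
  · rw [max_eq_left (sub_nonneg.mpr hba)]
    exact sub_le_sub_left (min_le_right x b) a
  · rw [max_eq_right (sub_nonpos.mpr (not_le.mp hba).le)]
    exact le_min (le_max_right _ _) ha

theorem ldic_box_nonempty_general (n11 n22 n12 n21 : ℕ) :
    (max ((n11 : ℝ) - n12) 0 ≤
      (if n12 ≤ n11 then (n11 : ℝ) - min (max ((n22 : ℝ) - n21) 0) (n12 : ℝ)
       else min (max ((n12 : ℝ) - max ((n22 : ℝ) - n21) 0) 0) (n11 : ℝ))) ∧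
    (max ((n22 : ℝ) - n21) 0 ≤
      (if n21 ≤ n22 then (n22 : ℝ) - min (max ((n11 : ℝ) - n12) 0) (n21 : ℝ)
       else min (max ((n21 : ℝ) - max ((n11 : ℝ) - n12) 0) 0) (n22 : ℝ))) := by
  simp only [← Nat.cast_le (α := ℝ)]
  exact ⟨max_sub_zero_le_ite n11.cast_nonneg _ _, max_sub_zero_le_ite n22.cast_nonneg _ _⟩

/-- The box B_LDIC is nonempty: L_i ≤ Ũ_i for i = 1, 2. -/
theorem ldic_box_nonempty (η : ℝ) (hη : 0 ≤ η) (n11 n22 n12 n21 : ℕ) :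
    (max ((n11 : ℝ) - n12) 0 ≤
      (if n12 ≤ n11 then (n11 : ℝ) - min (max ((n22 : ℝ) - n21) 0) (n12 : ℝ)
       else min (max ((n12 : ℝ) - max ((n22 : ℝ) - n21) 0) 0) (n11 : ℝ))) ∧
    (max ((n22 : ℝ) - n21) 0 ≤
      (if n21 ≤ n22 then (n22 : ℝ) - min (max ((n11 : ℝ) - n12) 0) (n21 : ℝ)
       else min (max ((n21 : ℝ) - max ((n11 : ℝ) - n12) 0) 0) (n22 : ℝ))) :=
  ldic_box_nonempty_general n11 n22 n12 n21
end

section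
/- Let η ≥ 0 and n11, n22, n12, n21 ∈ ℕ. Define L_i = (n_ii − n_ij)⁺, B_LDIC/FB = {(R1,R2) ∈ ℝ² : (L_i − η)⁺ ≤ R_i for i=1,2}, and let C_LDIC/FB be the feedback capacity region (R1 ≤ min(max(n11,n12),max(n11,n21)), R2 ≤ min(max(n22,n21),max(n22,n12)), R1+R2 ≤ min(max(n22,n21)+(n11−n21)⁺, max(n11,n12)+(n22−n12)⁺), R1,R2 ≥ 0). Similarly define Ũ_i as in the no-feedback case and N_LDIC = C_LDIC ∩ {(R1,R2): L_i ≤ R_i ≤ Ũ_i}. Then N_LDIC ⊆ C_LDIC/FB ∩ B_LDIC/FB. -/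
/-! The no-feedback sum-rate bounds are the feedback ones in disguise, since
`(a - c)⁺ + max b c = max a c + (b - c)⁺`; the single-user bounds `Rᵢ ≤ nᵢᵢ` are stronger
than the feedback ones, and lowering `Lᵢ` by `η ≥ 0` only relaxes `Lᵢ ≤ Rᵢ`. -/

section LinearOrderedAddCommGroup

variable {α : Type*} [AddCommGroup α] [LinearOrder α] [IsOrderedAddMonoid α]

theorem max_sub_zero_add_max_comm (a b c : α) :
    max (a - c) 0 + max b c = max a c + max (b - c) 0 := by
  rw [← sub_self c, max_sub_sub_right, max_sub_sub_right]
  abel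

theorem max_sub_zero_le_of_le {L R η : α} (hη : 0 ≤ η) (hR : 0 ≤ R) (hLR : L ≤ R) :
    max (L - η) 0 ≤ R :=
  max_le ((sub_le_self L hη).trans hLR) hR

end LinearOrderedAddCommGroup

theorem ne_region_subset_feedback_ne_region_general
    (η : ℝ) (hη : 0 ≤ η) (n11 n22 n12 n21 : ℕ) (R1 R2 : ℝ)
    (hR1 : 0 ≤ R1) (hR2 : 0 ≤ R2)
    -- C_LDIC constraints
    (c1 : R1 ≤ (n11 : ℝ))
    (c2 : R2 ≤ (n22 : ℝ))
    (c3 : R1 + R2 ≤ max ((n11 : ℝ) - n12) 0 + max (n22 : ℝ) (n12 : ℝ))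
    (c4 : R1 + R2 ≤ max ((n22 : ℝ) - n21) 0 + max (n11 : ℝ) (n21 : ℝ))
    -- B_LDIC constraints : L_i ≤ R_i ≤ Ũ_i
    (b1 : max ((n11 : ℝ) - n12) 0 ≤ R1)
    (b2 : max ((n22 : ℝ) - n21) 0 ≤ R2) :
    -- C_LDIC/FB constraints
    (R1 ≤ min (max (n11 : ℝ) (n12 : ℝ)) (max (n11 : ℝ) (n21 : ℝ))) ∧
    (R2 ≤ min (max (n22 : ℝ) (n21 : ℝ)) (max (n22 : ℝ) (n12 : ℝ))) ∧
    (R1 + R2 ≤ min (max (n22 : ℝ) (n21 : ℝ) + max ((n11 : ℝ) - n21) 0)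
                   (max (n11 : ℝ) (n12 : ℝ) + max ((n22 : ℝ) - n12) 0)) ∧
    -- B_LDIC/FB constraints
    (max (max ((n11 : ℝ) - n12) 0 - η) 0 ≤ R1) ∧
    (max (max ((n22 : ℝ) - n21) 0 - η) 0 ≤ R2) := by
  rw [max_sub_zero_add_max_comm] at c3 c4
  exact ⟨le_min (c1.trans (le_max_left _ _)) (c1.trans (le_max_left _ _)),
    le_min (c2.trans (le_max_left _ _)) (c2.trans (le_max_left _ _)),
    le_min c4 c3, max_sub_zero_le_of_le hη hR1 b1, max_sub_zero_le_of_le hη hR2 b2⟩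

/-- N_LDIC ⊆ C_LDIC/FB ∩ B_LDIC/FB : the η-NE region without feedback is
contained in the η-NE region with feedback. -/
theorem ne_region_subset_feedback_ne_region
    (η : ℝ) (hη : 0 ≤ η) (n11 n22 n12 n21 : ℕ) (R1 R2 : ℝ)
    (hR1 : 0 ≤ R1) (hR2 : 0 ≤ R2)
    -- C_LDIC constraints
    (c1 : R1 ≤ (n11 : ℝ))
    (c2 : R2 ≤ (n22 : ℝ))
    (c3 : R1 + R2 ≤ max ((n11 : ℝ) - n12) 0 + max (n22 : ℝ) (n12 : ℝ))
    (c4 : R1 + R2 ≤ max ((n22 : ℝ) - n21) 0 + max (n11 : ℝ) (n21 : ℝ))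
    (c5 : R1 + R2 ≤ max (n21 : ℝ) (max ((n11 : ℝ) - n12) 0)
            + max (n12 : ℝ) (max ((n22 : ℝ) - n21) 0))
    (c6 : 2 * R1 + R2 ≤ max (n11 : ℝ) (n21 : ℝ) + max ((n11 : ℝ) - n12) 0
            + max (n12 : ℝ) (max ((n22 : ℝ) - n21) 0))
    (c7 : R1 + 2 * R2 ≤ max (n22 : ℝ) (n12 : ℝ) + max ((n22 : ℝ) - n21) 0
            + max (n21 : ℝ) (max ((n11 : ℝ) - n12) 0))
    -- B_LDIC constraints : L_i ≤ R_i ≤ Ũ_i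
    (b1 : max ((n11 : ℝ) - n12) 0 ≤ R1)
    (b2 : max ((n22 : ℝ) - n21) 0 ≤ R2)
    (b3 : R1 ≤ (if n12 ≤ n11 then (n11 : ℝ) - min (max ((n22 : ℝ) - n21) 0) (n12 : ℝ)
                else min (max ((n12 : ℝ) - max ((n22 : ℝ) - n21) 0) 0) (n11 : ℝ)))
    (b4 : R2 ≤ (if n21 ≤ n22 then (n22 : ℝ) - min (max ((n11 : ℝ) - n12) 0) (n21 : ℝ)
                else min (max ((n21 : ℝ) - max ((n11 : ℝ) - n12) 0) 0) (n22 : ℝ))) :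
    -- C_LDIC/FB constraints
    (R1 ≤ min (max (n11 : ℝ) (n12 : ℝ)) (max (n11 : ℝ) (n21 : ℝ))) ∧
    (R2 ≤ min (max (n22 : ℝ) (n21 : ℝ)) (max (n22 : ℝ) (n12 : ℝ))) ∧
    (R1 + R2 ≤ min (max (n22 : ℝ) (n21 : ℝ) + max ((n11 : ℝ) - n21) 0)
                   (max (n11 : ℝ) (n12 : ℝ) + max ((n22 : ℝ) - n12) 0)) ∧
    -- B_LDIC/FB constraints
    (max (max ((n11 : ℝ) - n12) 0 - η) 0 ≤ R1) ∧
    (max (max ((n22 : ℝ) - n21) 0 - η) 0 ≤ R2) :=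
  ne_region_subset_feedback_ne_region_general η hη n11 n22 n12 n21 R1 R2 hR1 hR2 c1 c2 c3 c4 b1 b2
end

section
/- Let n11 = n22 = n > 0, n21 ≥ 2n, and n12 = 0. Then the η-NE region with feedback equals the η-NE region without feedback, i.e., B_LDIC/FB ∩ C_LDIC/FB = B_LDIC ∩ C_LDIC, for η = 0. -/
/-!
With no interference from transmitter 2 at receiver 1 (`n12 = 0`) and cross link
`n21 ≥ n11 + n22`, user 1's lower NE bound `(n11 - n12)⁺ = n11` already equals its
single-user capacity, so in both settings the NE region collapses to the segment
`{n11} × [0, n22]`: every remaining constraint, with or without feedback, is slack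
there because `n21` dominates all the sum-rate bounds.
-/

namespace LDIC

/-- `L_i = (n_ii - n_ij)⁺`. -/
def neLower (nii nij : ℕ) : ℝ := max ((nii : ℝ) - nij) 0

/-- `Ũ_i`, where `Lj` is the other user's `L_j`. -/
def neUpper (nii nij : ℕ) (Lj : ℝ) : ℝ :=
  if nij ≤ nii then (nii : ℝ) - min Lj (nij : ℝ)
  else min (max ((nij : ℝ) - Lj) 0) (nii : ℝ)

/-- `B_LDIC`. -/
def neBox (n11 n12 n21 n22 : ℕ) : Set (ℝ × ℝ) :=
  {p | neLower n11 n12 ≤ p.1 ∧ p.1 ≤ neUpper n11 n12 (neLower n22 n21) ∧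
    neLower n22 n21 ≤ p.2 ∧ p.2 ≤ neUpper n22 n21 (neLower n11 n12)}

/-- `B_LDIC/FB`. -/
def feedbackNEBox (n11 n12 n21 n22 : ℕ) : Set (ℝ × ℝ) :=
  {p | neLower n11 n12 ≤ p.1 ∧ neLower n22 n21 ≤ p.2}

/-- Bresler–Tse, Lemma 4. -/
def capacityRegion (n11 n12 n21 n22 : ℕ) : Set (ℝ × ℝ) :=
  {p | 0 ≤ p.1 ∧ 0 ≤ p.2 ∧ p.1 ≤ n11 ∧ p.2 ≤ n22 ∧
    p.1 + p.2 ≤ neLower n11 n12 + max (n22 : ℝ) n12 ∧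
    p.1 + p.2 ≤ neLower n22 n21 + max (n11 : ℝ) n21 ∧
    p.1 + p.2 ≤ max (n21 : ℝ) (neLower n11 n12) + max (n12 : ℝ) (neLower n22 n21) ∧
    2 * p.1 + p.2 ≤
      max (n11 : ℝ) n21 + neLower n11 n12 + max (n12 : ℝ) (neLower n22 n21) ∧
    p.1 + 2 * p.2 ≤
      max (n22 : ℝ) n12 + neLower n22 n21 + max (n21 : ℝ) (neLower n11 n12)}

/-- Suh–Tse, Corollary 1. -/
def feedbackCapacityRegion (n11 n12 n21 n22 : ℕ) : Set (ℝ × ℝ) :=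
  {p | 0 ≤ p.1 ∧ 0 ≤ p.2 ∧
    p.1 ≤ min (max (n11 : ℝ) n12) (max (n11 : ℝ) n21) ∧
    p.2 ≤ min (max (n22 : ℝ) n21) (max (n22 : ℝ) n12) ∧
    p.1 + p.2 ≤
      min (max (n11 : ℝ) n21 + neLower n22 n21) (max (n22 : ℝ) n12 + neLower n11 n12)}

theorem neLower_zero_right (nii : ℕ) : neLower nii 0 = nii := by
  simp [neLower]

theorem neLower_eq_zero_of_le {nii nij : ℕ} (h : nii ≤ nij) : neLower nii nij = 0 :=
  max_eq_right (by simpa using (Nat.cast_le (α := ℝ)).2 h)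

theorem neUpper_zero_cross (nii : ℕ) {Lj : ℝ} (hLj : 0 ≤ Lj) : neUpper nii 0 Lj = nii := by
  simp [neUpper, hLj]

theorem neUpper_of_add_le {nii nij nj : ℕ} (h : nj + nii ≤ nij) :
    neUpper nii nij nj = nii := by
  have h' : (nj : ℝ) + nii ≤ nij := by exact_mod_cast h
  unfold neUpper
  split_ifs with hle
  · have hnj : nj = 0 := by omega
    simp [hnj]
  · rw [max_eq_left (by linarith), min_eq_right (by linarith)]

variable {n11 n21 n22 : ℕ}

theorem neBox_inter_capacityRegion_eq (h : n11 + n22 ≤ n21) :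
    neBox n11 0 n21 n22 ∩ capacityRegion n11 0 n21 n22 =
      {(n11 : ℝ)} ×ˢ Set.Icc 0 (n22 : ℝ) := by
  have h' : (n11 : ℝ) + n22 ≤ n21 := by exact_mod_cast h
  have hL2 := neLower_eq_zero_of_le (show n22 ≤ n21 by omega)
  ext ⟨x, y⟩
  simp only [neBox, capacityRegion, Set.mem_inter_iff, Set.mem_ofPred_eq, Set.mem_prod,
    Set.mem_singleton_iff, Set.mem_Icc, neLower_zero_right, hL2,
    neUpper_zero_cross n11 le_rfl, neUpper_of_add_le h, Nat.cast_zero, max_self,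
    max_eq_left (Nat.cast_nonneg (α := ℝ) _),
    max_eq_right (show (n11 : ℝ) ≤ n21 by linarith),
    max_eq_left (show (n11 : ℝ) ≤ n21 by linarith)]
  constructor
  · rintro ⟨⟨hx₁, hx₂, hy₁, hy₂⟩, -⟩
    exact ⟨le_antisymm hx₂ hx₁, hy₁, hy₂⟩
  · rintro ⟨rfl, hy₁, hy₂⟩
    refine ⟨⟨le_rfl, le_rfl, hy₁, hy₂⟩, ?_⟩
    refine ⟨Nat.cast_nonneg _, hy₁, le_rfl, hy₂, ?_, ?_, ?_, ?_, ?_⟩ <;> linarith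

theorem feedbackNEBox_inter_feedbackCapacityRegion_eq (h : n11 + n22 ≤ n21) :
    feedbackNEBox n11 0 n21 n22 ∩ feedbackCapacityRegion n11 0 n21 n22 =
      {(n11 : ℝ)} ×ˢ Set.Icc 0 (n22 : ℝ) := by
  have h' : (n11 : ℝ) + n22 ≤ n21 := by exact_mod_cast h
  have hL2 := neLower_eq_zero_of_le (show n22 ≤ n21 by omega)
  ext ⟨x, y⟩
  simp only [feedbackNEBox, feedbackCapacityRegion, Set.mem_inter_iff, Set.mem_ofPred_eq,
    Set.mem_prod, Set.mem_singleton_iff, Set.mem_Icc, neLower_zero_right, hL2, Nat.cast_zero,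
    max_eq_left (Nat.cast_nonneg (α := ℝ) _),
    max_eq_right (show (n11 : ℝ) ≤ n21 by linarith),
    max_eq_right (show (n22 : ℝ) ≤ n21 by linarith)]
  constructor
  · rintro ⟨⟨hx₁, hy₁⟩, -, -, hx₂, hy₂, -⟩
    exact ⟨le_antisymm (hx₂.trans (min_le_left _ _)) hx₁, hy₁,
      hy₂.trans (min_le_right _ _)⟩
  · rintro ⟨rfl, hy₁, hy₂⟩
    refine ⟨⟨le_rfl, hy₁⟩, Nat.cast_nonneg _, hy₁, ?_, ?_, ?_⟩ <;>
      simp only [le_min_iff] <;> constructor <;> linarith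

end LDIC

theorem ne_region_eq_of_special_params_general (n n21 : ℕ) (h21 : 2 * n ≤ n21) :
    -- B_LDIC/FB ∩ C_LDIC/FB  (η = 0), with n11 = n22 = n, n12 = 0
    ({p : ℝ × ℝ |
        max ((n : ℝ) - (0 : ℕ)) 0 ≤ p.1 ∧ max ((n : ℝ) - n21) 0 ≤ p.2} ∩
     {p : ℝ × ℝ | 0 ≤ p.1 ∧ 0 ≤ p.2 ∧
        p.1 ≤ min (max (n : ℝ) ((0 : ℕ) : ℝ)) (max (n : ℝ) (n21 : ℝ)) ∧
        p.2 ≤ min (max (n : ℝ) (n21 : ℝ)) (max (n : ℝ) ((0 : ℕ) : ℝ)) ∧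
        p.1 + p.2 ≤ min (max (n : ℝ) (n21 : ℝ) + max ((n : ℝ) - n21) 0)
                        (max (n : ℝ) ((0 : ℕ) : ℝ) + max ((n : ℝ) - (0 : ℕ)) 0)})
    =
    -- B_LDIC ∩ C_LDIC
    ({p : ℝ × ℝ |
        max ((n : ℝ) - (0 : ℕ)) 0 ≤ p.1 ∧
        p.1 ≤ (if (0 : ℕ) ≤ n then (n : ℝ) - min (max ((n : ℝ) - n21) 0) ((0 : ℕ) : ℝ)
               else min (max (((0 : ℕ) : ℝ) - max ((n : ℝ) - n21) 0) 0) (n : ℝ)) ∧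
        max ((n : ℝ) - n21) 0 ≤ p.2 ∧
        p.2 ≤ (if n21 ≤ n then (n : ℝ) - min (max ((n : ℝ) - (0 : ℕ)) 0) (n21 : ℝ)
               else min (max ((n21 : ℝ) - max ((n : ℝ) - (0 : ℕ)) 0) 0) (n : ℝ))} ∩
     {p : ℝ × ℝ | 0 ≤ p.1 ∧ 0 ≤ p.2 ∧
        p.1 ≤ (n : ℝ) ∧ p.2 ≤ (n : ℝ) ∧
        p.1 + p.2 ≤ max ((n : ℝ) - (0 : ℕ)) 0 + max (n : ℝ) ((0 : ℕ) : ℝ) ∧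
        p.1 + p.2 ≤ max ((n : ℝ) - n21) 0 + max (n : ℝ) (n21 : ℝ) ∧
        p.1 + p.2 ≤ max (n21 : ℝ) (max ((n : ℝ) - (0 : ℕ)) 0)
                      + max ((0 : ℕ) : ℝ) (max ((n : ℝ) - n21) 0) ∧
        2 * p.1 + p.2 ≤ max (n : ℝ) (n21 : ℝ) + max ((n : ℝ) - (0 : ℕ)) 0
                      + max ((0 : ℕ) : ℝ) (max ((n : ℝ) - n21) 0) ∧
        p.1 + 2 * p.2 ≤ max (n : ℝ) ((0 : ℕ) : ℝ) + max ((n : ℝ) - n21) 0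
                      + max (n21 : ℝ) (max ((n : ℝ) - (0 : ℕ)) 0)}) := by
  have h : n + n ≤ n21 := by omega
  change LDIC.feedbackNEBox n 0 n21 n ∩ LDIC.feedbackCapacityRegion n 0 n21 n =
    LDIC.neBox n 0 n21 n ∩ LDIC.capacityRegion n 0 n21 n
  rw [LDIC.feedbackNEBox_inter_feedbackCapacityRegion_eq h, LDIC.neBox_inter_capacityRegion_eq h]

/-- For n11 = n22 = n > 0, n21 ≥ 2n, n12 = 0 and η = 0, the NE region with
feedback equals the NE region without feedback. -/
theorem ne_region_eq_of_special_params (n n21 : ℕ) (hn : 0 < n) (h21 : 2 * n ≤ n21) :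
    -- B_LDIC/FB ∩ C_LDIC/FB  (η = 0), with n11 = n22 = n, n12 = 0
    ({p : ℝ × ℝ |
        max ((n : ℝ) - (0 : ℕ)) 0 ≤ p.1 ∧ max ((n : ℝ) - n21) 0 ≤ p.2} ∩
     {p : ℝ × ℝ | 0 ≤ p.1 ∧ 0 ≤ p.2 ∧
        p.1 ≤ min (max (n : ℝ) ((0 : ℕ) : ℝ)) (max (n : ℝ) (n21 : ℝ)) ∧
        p.2 ≤ min (max (n : ℝ) (n21 : ℝ)) (max (n : ℝ) ((0 : ℕ) : ℝ)) ∧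
        p.1 + p.2 ≤ min (max (n : ℝ) (n21 : ℝ) + max ((n : ℝ) - n21) 0)
                        (max (n : ℝ) ((0 : ℕ) : ℝ) + max ((n : ℝ) - (0 : ℕ)) 0)})
    =
    -- B_LDIC ∩ C_LDIC
    ({p : ℝ × ℝ |
        max ((n : ℝ) - (0 : ℕ)) 0 ≤ p.1 ∧
        p.1 ≤ (if (0 : ℕ) ≤ n then (n : ℝ) - min (max ((n : ℝ) - n21) 0) ((0 : ℕ) : ℝ)
               else min (max (((0 : ℕ) : ℝ) - max ((n : ℝ) - n21) 0) 0) (n : ℝ)) ∧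
        max ((n : ℝ) - n21) 0 ≤ p.2 ∧
        p.2 ≤ (if n21 ≤ n then (n : ℝ) - min (max ((n : ℝ) - (0 : ℕ)) 0) (n21 : ℝ)
               else min (max ((n21 : ℝ) - max ((n : ℝ) - (0 : ℕ)) 0) 0) (n : ℝ))} ∩
     {p : ℝ × ℝ | 0 ≤ p.1 ∧ 0 ≤ p.2 ∧
        p.1 ≤ (n : ℝ) ∧ p.2 ≤ (n : ℝ) ∧
        p.1 + p.2 ≤ max ((n : ℝ) - (0 : ℕ)) 0 + max (n : ℝ) ((0 : ℕ) : ℝ) ∧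
        p.1 + p.2 ≤ max ((n : ℝ) - n21) 0 + max (n : ℝ) (n21 : ℝ) ∧
        p.1 + p.2 ≤ max (n21 : ℝ) (max ((n : ℝ) - (0 : ℕ)) 0)
                      + max ((0 : ℕ) : ℝ) (max ((n : ℝ) - n21) 0) ∧
        2 * p.1 + p.2 ≤ max (n : ℝ) (n21 : ℝ) + max ((n : ℝ) - (0 : ℕ)) 0
                      + max ((0 : ℕ) : ℝ) (max ((n : ℝ) - n21) 0) ∧
        p.1 + 2 * p.2 ≤ max (n : ℝ) ((0 : ℕ) : ℝ) + max ((n : ℝ) - n21) 0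
                      + max (n21 : ℝ) (max ((n : ℝ) - (0 : ℕ)) 0)}) :=
  ne_region_eq_of_special_params_general n n21 h21
end

section
/- For real numbers SNR1 > 0, INR12 ≥ 1 and ρ ∈ [0,1], log₂(1 + SNR1 + INR12 + 2√(SNR1·INR12)) − log₂(1 + SNR1 + INR12 + 2ρ√(SNR1·INR12)) + 1 ≤ log₂ 6. -/
/-!
By AM–GM, `2√(SNR1·INR12) ≤ SNR1 + INR12`, so the full-correlation power
`1 + SNR1 + INR12 + 2√(SNR1·INR12)` is at most twice `1 + SNR1 + INR12`, which is at most the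
power at any correlation `ρ ≥ 0`. The difference of the two logarithms is therefore at most
`log₂ 2 = 1`, and the left-hand side is at most `2 = log₂ 4 ≤ log₂ 6`.
-/

open Real

lemma Real.two_mul_sqrt_mul_le_add {a b : ℝ} (ha : 0 ≤ a) (hb : 0 ≤ b) :
    2 * √(a * b) ≤ a + b := by
  have h : √(a * b) ≤ (a + b) / 2 := by
    rw [Real.sqrt_le_iff]
    exact ⟨by positivity, by nlinarith [four_mul_le_sq_add a b]⟩
  linarith

lemma Real.logb_sub_logb_le_one {b x y : ℝ} (hb : 1 < b) (hx : 0 < x) (hxy : x ≤ b * y) :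
    logb b x - logb b y ≤ 1 := by
  have hy : 0 < y := pos_of_mul_pos_right (hx.trans_le hxy) (by linarith)
  have h : logb b x ≤ logb b (b * y) := logb_le_logb_of_le hb hx hxy
  rw [logb_mul (by positivity) hy.ne', logb_self_eq_one hb] at h
  linarith

lemma one_add_add_add_two_sqrt_le_two_mul {S I ρ : ℝ} (hS : 0 ≤ S) (hI : 0 ≤ I) (hρ : 0 ≤ ρ) :
    1 + S + I + 2 * √(S * I) ≤ 2 * (1 + S + I + 2 * ρ * √(S * I)) := by
  have hamgm := Real.two_mul_sqrt_mul_le_add hS hI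
  have : 0 ≤ ρ * √(S * I) := by positivity
  linarith

lemma two_le_logb_two_six : (2 : ℝ) ≤ logb 2 6 := by
  rw [le_logb_iff_rpow_le (by norm_num) (by norm_num)]
  norm_num

theorem deviation_gain_le_log2_six_general (SNR1 INR12 ρ : ℝ)
    (hS : 0 < SNR1) (hI : 1 ≤ INR12) (hρ0 : 0 ≤ ρ) :
    logb 2 (1 + SNR1 + INR12 + 2 * Real.sqrt (SNR1 * INR12)) -
      logb 2 (1 + SNR1 + INR12 + 2 * ρ * Real.sqrt (SNR1 * INR12)) + 1 ≤
    logb 2 6 := by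
  have hgain : logb 2 (1 + SNR1 + INR12 + 2 * √(SNR1 * INR12)) -
      logb 2 (1 + SNR1 + INR12 + 2 * ρ * √(SNR1 * INR12)) ≤ 1 :=
    Real.logb_sub_logb_le_one one_lt_two (by positivity)
      (one_add_add_add_two_sqrt_le_two_mul hS.le (by linarith) hρ0)
  linarith [two_le_logb_two_six]

/-- Key estimate in Lemma 15: the deviation gain is at most log₂ 6. -/
theorem deviation_gain_le_log2_six (SNR1 INR12 ρ : ℝ)
    (hS : 0 < SNR1) (hI : 1 ≤ INR12) (hρ0 : 0 ≤ ρ) (hρ1 : ρ ≤ 1) :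
    logb 2 (1 + SNR1 + INR12 + 2 * Real.sqrt (SNR1 * INR12)) -
      logb 2 (1 + SNR1 + INR12 + 2 * ρ * Real.sqrt (SNR1 * INR12)) + 1 ≤
    logb 2 6 :=
  deviation_gain_le_log2_six_general SNR1 INR12 ρ hS hI hρ0
end

section
/- Let n11, n22, n12, n21 ∈ ℕ. Suppose nonnegative reals (R1C, R1R, R1P, R2C, R2R, R2P) satisfy the randomized Han–Kobayashi achievability conditions: R1C+R1R ≤ n21, R2P ≤ (n22−n12)⁺, R1C+R1P+R2C+R2R ≤ max(n11,n12), R2C+R2R ≤ n12, R1P ≤ (n11−n21)⁺, R2C+R2P+R1C+R1R ≤ max(n22,n21). Then the pair (R1, R2) = (R1C+R1P, R2C+R2P) lies in the feedback capacity region C_LDIC/FB. -/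
/-!
Every bound of the region is a sum of achievability constraints, after dropping nonnegative
rate parts. For the individual rate bounds, `max n11 n21` splits as the budget `n21` of the
parts of message 1 carried over the cross link plus the private budget `(n11 - n21)⁺`
(symmetrically for user 2).
-/

section

variable {α : Type*} [AddCommGroup α] [LinearOrder α] [IsOrderedAddMonoid α]

theorem add_max_sub_zero (a b : α) : b + max (a - b) 0 = max a b := by
  rw [add_max, add_sub_cancel, add_zero]

theorem add_le_max_of_le_of_le_max_sub_zero {a b x y : α} (hx : x ≤ b)
    (hy : y ≤ max (a - b) 0) : x + y ≤ max a b :=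
  add_max_sub_zero a b ▸ add_le_add hx hy

end

/-- Soundness of Lemma 5: rates achievable by the randomized Han–Kobayashi
scheme with feedback lie in the feedback capacity region C_LDIC/FB. -/
theorem hk_rates_in_feedback_capacity (n11 n22 n12 n21 : ℕ)
    (R1C R1R R1P R2C R2R R2P : ℝ)
    (h1C : 0 ≤ R1C) (h1R : 0 ≤ R1R) (h1P : 0 ≤ R1P)
    (h2C : 0 ≤ R2C) (h2R : 0 ≤ R2R) (h2P : 0 ≤ R2P)
    (a1 : R1C + R1R ≤ (n21 : ℝ))
    (a2 : R2P ≤ max ((n22 : ℝ) - n12) 0)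
    (a3 : R1C + R1P + R2C + R2R ≤ max (n11 : ℝ) (n12 : ℝ))
    (a4 : R2C + R2R ≤ (n12 : ℝ))
    (a5 : R1P ≤ max ((n11 : ℝ) - n21) 0)
    (a6 : R2C + R2P + R1C + R1R ≤ max (n22 : ℝ) (n21 : ℝ)) :
    0 ≤ R1C + R1P ∧ 0 ≤ R2C + R2P ∧
    R1C + R1P ≤ min (max (n11 : ℝ) (n12 : ℝ)) (max (n11 : ℝ) (n21 : ℝ)) ∧
    R2C + R2P ≤ min (max (n22 : ℝ) (n21 : ℝ)) (max (n22 : ℝ) (n12 : ℝ)) ∧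
    (R1C + R1P) + (R2C + R2P) ≤
      min (max (n22 : ℝ) (n21 : ℝ) + max ((n11 : ℝ) - n21) 0)
          (max (n11 : ℝ) (n12 : ℝ) + max ((n22 : ℝ) - n12) 0) := by
  refine ⟨add_nonneg h1C h1P, add_nonneg h2C h2P, le_min ?_ ?_, le_min ?_ ?_, le_min ?_ ?_⟩
  · linarith
  · exact add_le_max_of_le_of_le_max_sub_zero (by linarith) a5
  · linarith
  · exact add_le_max_of_le_of_le_max_sub_zero (by linarith) a2
  · linarith
  · linarith
end
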